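/- Let R be a reduced commutative ring with unity. Every nonzero annihilating ideal of R is contained in a maximal element of the set of nonzero annihilating ideals if and only if ⋂_{P ∈ B(R)} P = {0} (i.e., the zero ideal is a fixed-place ideal). -/

import Mathlib

/-!
In a reduced ring a nonzero prime `P = Ann(x)` is a maximal annihilating ideal: if `P ≤ J` and
`z ≠ 0` kills `J`, then `z ∉ P` (otherwise `z² = 0`), so primality of `P` gives `J ≤ P`.
Conversely, a maximal annihilating ideal `M` killed by `z` equals `Ann(z)`, and it is prime because
`Ann(az) ⊇ M` is again annihilating for `a ∉ M`.

If `⋂ B(R) = 0` and `x ≠ 0` kills `I`, some `P ∈ B(R)` avoids `x`, hence contains `I`, and `P` is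
maximal. If every annihilating ideal lies in a maximal one and `a ≠ 0`, then `a` avoids the maximal
`Ann(x) ⊇ Ann(a)`, since `a ∈ Ann(x)` would put `x` in `Ann(x)`; when `Ann(a) = 0`, `a` avoids every
member of `B(R)`, and `B(R)` is nonempty (it contains `0` when `R` is a domain).
-/

/-- `I` is a nonzero annihilating ideal: `I ≠ 0` and `Ann(I) ≠ 0`. -/
def IsAnnIdeal {R : Type*} [CommRing R] (I : Ideal R) : Prop :=
  I ≠ ⊥ ∧ ∃ x : R, x ≠ 0 ∧ ∀ i ∈ I, x * i = 0

section

open Ideal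

variable {R : Type*} [CommRing R]

variable (R) in
/-- The set `B(R)` of prime ideals of the form `Ann(x)`. -/
def annihilatorPrimes : Set (Ideal R) :=
  {P | P.IsPrime ∧ ∃ x : R, ∀ y : R, y ∈ P ↔ y * x = 0}

def IsMaxAnnIdeal (M : Ideal R) : Prop :=
  IsAnnIdeal M ∧ ∀ J : Ideal R, IsAnnIdeal J → M ≤ J → J = M

variable (R) in
def HasMaxAnnIdeals : Prop :=
  ∀ I : Ideal R, IsAnnIdeal I → ∃ M, IsMaxAnnIdeal M ∧ I ≤ M

theorem hasMaxAnnIdeals_iff : HasMaxAnnIdeals R ↔ ∀ I : Ideal R, IsAnnIdeal I →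
    ∃ M : Ideal R, IsAnnIdeal M ∧ (∀ J : Ideal R, IsAnnIdeal J → M ≤ J → J = M) ∧ I ≤ M := by
  simp only [HasMaxAnnIdeals, IsMaxAnnIdeal, and_assoc]

theorem mem_torsionOf_iff_mul_eq_zero {a y : R} : y ∈ torsionOf R R a ↔ y * a = 0 := by
  rw [mem_torsionOf_iff, smul_eq_mul]

theorem isAnnIdeal_torsionOf {a : R} (ha : a ≠ 0) (h : torsionOf R R a ≠ ⊥) :
    IsAnnIdeal (torsionOf R R a) :=
  ⟨h, a, ha, fun i hi => by rw [mul_comm]; exact mem_torsionOf_iff_mul_eq_zero.mp hi⟩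

theorem Ideal.IsPrime.ne_zero_of_forall_mem_iff {P : Ideal R} {x : R} (hP : P.IsPrime)
    (hx : ∀ y, y ∈ P ↔ y * x = 0) : x ≠ 0 := by
  rintro rfl
  exact hP.ne_top (eq_top_iff.2 fun y _ => (hx y).2 (mul_zero y))

theorem notMem_of_forall_mem_iff [IsReduced R] {P : Ideal R} {x : R}
    (hx : ∀ y, y ∈ P ↔ y * x = 0) (hx0 : x ≠ 0) : x ∉ P :=
  fun h => hx0 (sq_eq_zero_iff.mp ((pow_two x).trans ((hx x).1 h)))

theorem Ideal.IsPrime.le_of_mul_eq_zero {P I : Ideal R} {z : R} (hP : P.IsPrime) (hz : z ∉ P)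
    (hI : ∀ i ∈ I, z * i = 0) : I ≤ P :=
  fun i hi => (hP.mem_or_mem (hI i hi ▸ P.zero_mem)).resolve_left hz

theorem IsAnnIdeal.le_of_isPrime_of_le [IsReduced R] {J P : Ideal R} (hJ : IsAnnIdeal J)
    (hP : P.IsPrime) (hPJ : P ≤ J) : J ≤ P := by
  obtain ⟨-, z, hz, hzJ⟩ := hJ
  exact hP.le_of_mul_eq_zero
    (fun hzP => hz (sq_eq_zero_iff.mp ((pow_two z).trans (hzJ z (hPJ hzP))))) hzJ

theorem isMaxAnnIdeal_of_mem_annihilatorPrimes [IsReduced R] {P : Ideal R}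
    (hPB : P ∈ annihilatorPrimes R) (hP0 : P ≠ ⊥) : IsMaxAnnIdeal P := by
  obtain ⟨hP, x, hx⟩ := hPB
  exact ⟨⟨hP0, x, hP.ne_zero_of_forall_mem_iff hx, fun i hi => by rw [mul_comm]; exact (hx i).1 hi⟩,
    fun J hJ hPJ => le_antisymm (hJ.le_of_isPrime_of_le hP hPJ) hPJ⟩

theorem IsMaxAnnIdeal.torsionOf_eq {M : Ideal R} {z : R} (hM : IsMaxAnnIdeal M) (hz : z ≠ 0)
    (hMz : M ≤ torsionOf R R z) : torsionOf R R z = M :=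
  hM.2 _ (isAnnIdeal_torsionOf hz fun h => hM.1.1 (le_bot_iff.mp (h ▸ hMz))) hMz

theorem IsMaxAnnIdeal.mem_annihilatorPrimes {M : Ideal R} (hM : IsMaxAnnIdeal M) :
    M ∈ annihilatorPrimes R := by
  obtain ⟨-, z, hz, hzM⟩ := hM.1
  have hMz : torsionOf R R z = M := hM.torsionOf_eq hz fun m hm =>
    mem_torsionOf_iff_mul_eq_zero.mpr (by rw [mul_comm]; exact hzM m hm)
  refine ⟨⟨?_, fun {a b} hab => ?_⟩, z, fun y => by rw [← hMz, mem_torsionOf_iff_mul_eq_zero]⟩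
  · rw [ne_eq, ← hMz, torsionOf_eq_top_iff]
    exact hz
  · rw [or_iff_not_imp_left]
    intro ha
    have haz : a * z ≠ 0 := fun h => ha (hMz ▸ mem_torsionOf_iff_mul_eq_zero.mpr h)
    have hMaz : torsionOf R R (a * z) = M := hM.torsionOf_eq haz fun m hm => by
      rw [← hMz, mem_torsionOf_iff_mul_eq_zero] at hm
      rw [mem_torsionOf_iff_mul_eq_zero, mul_left_comm, hm, mul_zero]
    rw [← hMz, mem_torsionOf_iff_mul_eq_zero] at hab
    rw [← hMaz, mem_torsionOf_iff_mul_eq_zero, ← mul_assoc, mul_comm b, hab]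

theorem hasMaxAnnIdeals_of_sInf_eq_bot [IsReduced R] (hB : sInf (annihilatorPrimes R) = ⊥) :
    HasMaxAnnIdeals R := by
  rintro I ⟨hI0, x, hx, hxI⟩
  have hxB : x ∉ sInf (annihilatorPrimes R) := by rwa [hB, mem_bot]
  obtain ⟨P, hPB, hxP⟩ : ∃ P ∈ annihilatorPrimes R, x ∉ P := by simpa [mem_sInf] using hxB
  have hIP : I ≤ P := hPB.1.le_of_mul_eq_zero hxP hxI
  exact ⟨P, isMaxAnnIdeal_of_mem_annihilatorPrimes hPB (ne_bot_of_le_ne_bot hI0 hIP), hIP⟩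

namespace HasMaxAnnIdeals

variable [IsReduced R] (H : HasMaxAnnIdeals R)
include H

theorem exists_notMem_of_torsionOf_ne_bot {a : R} (ha : a ≠ 0) (hann : torsionOf R R a ≠ ⊥) :
    ∃ P ∈ annihilatorPrimes R, a ∉ P := by
  obtain ⟨M, hM, hle⟩ := H _ (isAnnIdeal_torsionOf ha hann)
  have hMB := hM.mem_annihilatorPrimes
  obtain ⟨x, hx⟩ := hMB.2
  have hx0 := hMB.1.ne_zero_of_forall_mem_iff hx
  refine ⟨M, hMB, fun haM => notMem_of_forall_mem_iff hx hx0 (hle ?_)⟩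
  rw [mem_torsionOf_iff_mul_eq_zero, mul_comm]
  exact (hx a).1 haM

theorem annihilatorPrimes_nonempty [Nontrivial R] : (annihilatorPrimes R).Nonempty := by
  by_cases h : ∃ b : R, b ≠ 0 ∧ torsionOf R R b ≠ ⊥
  · obtain ⟨b, hb, hann⟩ := h
    obtain ⟨P, hP, -⟩ := H.exists_notMem_of_torsionOf_ne_bot hb hann
    exact ⟨P, hP⟩
  · push Not at h
    have : NoZeroDivisors R := ⟨fun {a b} hab => or_iff_not_imp_right.2 fun hb => by
      rw [← mem_bot, ← h b hb, mem_torsionOf_iff_mul_eq_zero]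
      exact hab⟩
    exact ⟨⊥, isPrime_bot, 1, fun y => by simp⟩

theorem exists_notMem {a : R} (ha : a ≠ 0) : ∃ P ∈ annihilatorPrimes R, a ∉ P := by
  by_cases hann : torsionOf R R a = ⊥
  · have : Nontrivial R := nontrivial_of_ne a 0 ha
    obtain ⟨P, hPB⟩ := H.annihilatorPrimes_nonempty
    obtain ⟨x, hx⟩ := hPB.2
    refine ⟨P, hPB, fun haP => hPB.1.ne_zero_of_forall_mem_iff hx ?_⟩
    rw [← mem_bot, ← hann, mem_torsionOf_iff_mul_eq_zero, mul_comm]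
    exact (hx a).1 haP
  · exact H.exists_notMem_of_torsionOf_ne_bot ha hann

theorem sInf_annihilatorPrimes_eq_bot : sInf (annihilatorPrimes R) = ⊥ := by
  refine eq_bot_iff.2 fun a ha => mem_bot.2 (by_contra fun ha0 => ?_)
  obtain ⟨P, hPB, haP⟩ := H.exists_notMem ha0
  exact haP (mem_sInf.1 ha hPB)

end HasMaxAnnIdeals

end

theorem stmt11 {R : Type*} [CommRing R] [IsReduced R] :
    (∀ I : Ideal R, IsAnnIdeal I →
        ∃ M : Ideal R, IsAnnIdeal M ∧ (∀ J : Ideal R, IsAnnIdeal J → M ≤ J → J = M) ∧ I ≤ M) ↔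
      sInf {P : Ideal R | P.IsPrime ∧ ∃ x : R, ∀ y : R, y ∈ P ↔ y * x = 0} = ⊥ := by
  rw [← hasMaxAnnIdeals_iff]
  exact ⟨HasMaxAnnIdeals.sInf_annihilatorPrimes_eq_bot, hasMaxAnnIdeals_of_sInf_eq_bot⟩
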